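/- With q = exp(iπ/8) and quantum integers n_q = sin(nπ/8)/sin(π/8), the sum of the quantum dimensions of the SU(4) level-4 representations 000, 210, 012, 040 equals 8 + 4√2. -/

import Mathlib

open Real

set_option maxHeartbeats 1000000

/-- Quantum integer n_q = sin(nπ/8)/sin(π/8) for κ = 8 (SU(4) at level 4). -/
noncomputable def qint (n : ℕ) : ℝ := sin (n * π / 8) / sin (π / 8)

/-- Quantum Weyl dimension of the SU(4) irrep with highest weight {a,b,c}:
product of ⟨m+ρ,α⟩_q over the six positive roots of A₃, divided by the same
product for ρ = {1,1,1}. -/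
noncomputable def qdim (a b c : ℕ) : ℝ :=
  (qint (a+1) * qint (b+1) * qint (c+1) * qint (a+b+2) * qint (b+c+2) *
    qint (a+b+c+3)) /
  (qint 1 * qint 1 * qint 1 * qint 2 * qint 2 * qint 3)

/-- The sum of the quantum dimensions of the SU(4) level-4 representations
000, 210, 012 and 040 (the first modular block of E₄(SU(4))) equals 8 + 4√2. -/
theorem first_block_E4_qdim_sum :
    qdim 0 0 0 + qdim 2 1 0 + qdim 0 1 2 + qdim 0 4 0 = 8 + 4 * Real.sqrt 2 := by
  have ha : sin (π/8) > 0 := Real.sin_pos_of_pos_of_lt_pi (by positivity)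
    (by nlinarith [Real.pi_pos])
  have hb : sin (3*π/8) > 0 := Real.sin_pos_of_pos_of_lt_pi (by positivity)
    (by nlinarith [Real.pi_pos])
  have h2 : sin (2*π/8) = Real.sqrt 2 / 2 := by
    rw [show (2:ℝ)*π/8 = π/4 by ring, Real.sin_pi_div_four]
  have h5 : sin (5*π/8) = sin (3*π/8) := by
    rw [show (5:ℝ)*π/8 = π - 3*π/8 by ring, Real.sin_pi_sub]
  have h6 : sin (6*π/8) = Real.sqrt 2 / 2 := by
    rw [show (6:ℝ)*π/8 = π - 2*π/8 by ring, Real.sin_pi_sub, h2]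
  have h7 : sin (7*π/8) = sin (π/8) := by
    rw [show (7:ℝ)*π/8 = π - π/8 by ring, Real.sin_pi_sub]
  have hs2 : Real.sqrt 2 > 0 := by positivity
  have hsq : Real.sqrt 2 ^ 2 = 2 := Real.sq_sqrt (by norm_num)
  have hle : Real.sqrt 2 ≤ 2 := by nlinarith [hsq, hs2]
  have haa : sin (π/8) ^ 2 = (2 - Real.sqrt 2) / 4 := by
    rw [Real.sin_pi_div_eight, div_pow, Real.sq_sqrt (by linarith)]
    norm_num
  have hbb : sin (3*π/8) ^ 2 = (2 + Real.sqrt 2) / 4 := by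
    rw [show (3:ℝ)*π/8 = π/2 - π/8 by ring, Real.sin_pi_div_two_sub,
      Real.cos_pi_div_eight, div_pow, Real.sq_sqrt (by positivity)]
    norm_num
  have hane := ne_of_gt ha
  have hbne := ne_of_gt hb
  have hb2 : sin (3*π/8) ^ 2 = (3 + 2*Real.sqrt 2) * sin (π/8) ^ 2 := by
    rw [haa, hbb]
    linear_combination (1/2) * hsq
  have q1 : qint 1 = 1 := by
    rw [qint]; push_cast; rw [one_mul, div_self hane]
  have q2 : qint 2 = Real.sqrt 2 / (2 * sin (π/8)) := by
    rw [qint]; push_cast; rw [h2]; ring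
  have q3 : qint 3 = sin (3*π/8) / sin (π/8) := by
    rw [qint]; norm_num
  have q5 : qint 5 = sin (3*π/8) / sin (π/8) := by
    rw [qint]; push_cast; rw [h5]
  have q6 : qint 6 = Real.sqrt 2 / (2 * sin (π/8)) := by
    rw [qint]; push_cast; rw [h6]; ring
  have q7 : qint 7 = 1 := by
    rw [qint]; push_cast; rw [h7, div_self hane]
  have e1 : qdim 0 0 0 = 1 := by
    show (qint 1 * qint 1 * qint 1 * qint 2 * qint 2 * qint 3) /
      (qint 1 * qint 1 * qint 1 * qint 2 * qint 2 * qint 3) = 1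
    rw [q1, q2, q3]
    generalize sin (π/8) = s at hane ⊢
    generalize sin (3*π/8) = u at hbne ⊢
    have h2ne : Real.sqrt 2 ≠ 0 := ne_of_gt hs2
    field_simp
  have e2 : qdim 2 1 0 = 3 + 2 * Real.sqrt 2 := by
    show (qint 3 * qint 2 * qint 1 * qint 5 * qint 3 * qint 6) /
      (qint 1 * qint 1 * qint 1 * qint 2 * qint 2 * qint 3) = 3 + 2 * Real.sqrt 2
    rw [q1, q2, q3, q5, q6]
    generalize hsv : sin (π/8) = v at hane hb2 ⊢
    generalize huv : sin (3*π/8) = u at hbne hb2 ⊢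
    have h2ne : Real.sqrt 2 ≠ 0 := ne_of_gt hs2
    field_simp
    ring_nf
    linear_combination hb2
  have e3 : qdim 0 1 2 = 3 + 2 * Real.sqrt 2 := by
    show (qint 1 * qint 2 * qint 3 * qint 3 * qint 5 * qint 6) /
      (qint 1 * qint 1 * qint 1 * qint 2 * qint 2 * qint 3) = 3 + 2 * Real.sqrt 2
    rw [q1, q2, q3, q5, q6]
    generalize hsv : sin (π/8) = v at hane hb2 ⊢
    generalize huv : sin (3*π/8) = u at hbne hb2 ⊢
    have h2ne : Real.sqrt 2 ≠ 0 := ne_of_gt hs2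
    field_simp
    ring_nf
    linear_combination hb2
  have e4 : qdim 0 4 0 = 1 := by
    show (qint 1 * qint 5 * qint 1 * qint 6 * qint 6 * qint 7) /
      (qint 1 * qint 1 * qint 1 * qint 2 * qint 2 * qint 3) = 1
    rw [q1, q2, q3, q5, q6, q7]
    generalize hsv : sin (π/8) = v at hane ⊢
    generalize huv : sin (3*π/8) = u at hbne ⊢
    have h2ne : Real.sqrt 2 ≠ 0 := ne_of_gt hs2
    field_simp
  rw [e1, e2, e3, e4]
  ring
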